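/- Let m, n ≥ 1 and let μ_1, μ_2 be any two Miura-locally-valid MV assignments of the m×n Miura-ori. Then there is a finite sequence of single face flips transforming μ_1 into μ_2 in which every intermediate MV assignment is Miura-locally-valid; that is, the origami flip graph of the m×n Miura-ori is connected. -/

import Mathlib

/-- A crease edge of the `m × n` square grid crease pattern: a vertical crease
`V i j` between faces `(i,j)` and `(i+1,j)`, or a horizontal crease `H i j`
between faces `(i,j)` and `(i,j+1)`. -/
inductive Crease (m n : ℕ) : Type where
  | V : (i j : ℕ) → i + 1 < m → j < n → Crease m n
  | H : (i j : ℕ) → i < m → j + 1 < n → Crease m n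

/-- The face `F` borders the crease `e`. -/
def Borders {m n : ℕ} (F : ℕ × ℕ) : Crease m n → Prop
  | .V i j _ _ => F = (i, j) ∨ F = (i + 1, j)
  | .H i j _ _ => F = (i, j) ∨ F = (i, j + 1)

instance {m n : ℕ} (F : ℕ × ℕ) (e : Crease m n) : Decidable (Borders F e) :=
  match e with
  | .V i j _ _ => inferInstanceAs (Decidable (F = (i, j) ∨ F = (i + 1, j)))
  | .H i j _ _ => inferInstanceAs (Decidable (F = (i, j) ∨ F = (i, j + 1)))

/-- A mountain-valley assignment takes values in `{-1, 1}`. -/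
def IsMV {m n : ℕ} (μ : Crease m n → ℤ) : Prop :=
  ∀ e, μ e = 1 ∨ μ e = -1

/-- Local validity: at every interior vertex `(a+1, b+1)` the sum of `μ` over the four
incident crease edges is `2` or `-2`. -/
def LocallyValid {m n : ℕ} (μ : Crease m n → ℤ) : Prop :=
  ∀ a b : ℕ, ∀ ha : a + 1 < m, ∀ hb : b + 1 < n,
    μ (.V a b ha (by omega)) + μ (.V a (b + 1) ha hb) +
      μ (.H a b (by omega) hb) + μ (.H (a + 1) b ha hb) = 2 ∨
    μ (.V a b ha (by omega)) + μ (.V a (b + 1) ha hb) +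
      μ (.H a b (by omega) hb) + μ (.H (a + 1) b ha hb) = -2

/-- The face faceFlip of `μ` at the face `F`. -/
def faceFlip {m n : ℕ} (μ : Crease m n → ℤ) (F : ℕ × ℕ) (e : Crease m n) : ℤ :=
  if Borders F e then -μ e else μ e

/-- The faces of the `m × n` square grid. -/
def Faces (m n : ℕ) : Finset (ℕ × ℕ) := Finset.range m ×ˢ Finset.range n

/-- One of the two faces bordering a crease. -/
def faceA {m n : ℕ} : Crease m n → ℕ × ℕ
  | .V i j _ _ => (i, j)
  | .H i j _ _ => (i, j)

/-- The other face bordering a crease. -/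
def faceB {m n : ℕ} : Crease m n → ℕ × ℕ
  | .V i j _ _ => (i + 1, j)
  | .H i j _ _ => (i, j + 1)

/-- Miura local validity at every interior vertex `v = (a+1, b+1)`:
(a) the sum of `μ` over the four incident creases is `2` or `-2`, and
(b) the values of `μ` on `V (a,b)`, `V (a,b+1)` and the near horizontal crease
(`H (a,b)` if the row index `b+1` is even, `H (a+1,b)` if it is odd) are not all equal. -/
def MiuraLocallyValid {m n : ℕ} (μ : Crease m n → ℤ) : Prop :=
  ∀ a b : ℕ, ∀ ha : a + 1 < m, ∀ hb : b + 1 < n,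
    (μ (.V a b ha (by omega)) + μ (.V a (b + 1) ha hb) +
        μ (.H a b (by omega) hb) + μ (.H (a + 1) b ha hb) = 2 ∨
      μ (.V a b ha (by omega)) + μ (.V a (b + 1) ha hb) +
        μ (.H a b (by omega) hb) + μ (.H (a + 1) b ha hb) = -2) ∧
    ¬ (μ (.V a b ha (by omega)) = μ (.V a (b + 1) ha hb) ∧
        μ (.V a (b + 1) ha hb) =
          μ (if (b + 1) % 2 = 0 then Crease.H a b (by omega) hb
             else Crease.H (a + 1) b ha hb))

/-- `c` is the coloring of the faces by `ℤ/3ℤ` associated to the MV assignment `μ`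
of the Miura-ori: `c (0,0) = 0`; within row `j`, `c (i+1,j) = c (i,j) ± μ (V i j)`
with sign `+` for even `j` and `-` for odd `j`; and between rows,
`c (m-1, j+1) = c (m-1, j) + μ (H (m-1) j)` for even `j` and
`c (0, j+1) = c (0, j) + μ (H 0 j)` for odd `j`. -/
def IsAssocColoring (m n : ℕ) (hm : 1 ≤ m) (μ : Crease m n → ℤ)
    (c : ℕ × ℕ → ZMod 3) : Prop :=
  c (0, 0) = 0 ∧
  (∀ i j : ℕ, ∀ hi : i + 1 < m, ∀ hj : j < n,
    c (i + 1, j) = c (i, j) +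
      (if j % 2 = 0 then ((μ (.V i j hi hj) : ℤ) : ZMod 3)
       else -((μ (.V i j hi hj) : ℤ) : ZMod 3))) ∧
  (∀ j : ℕ, ∀ hj : j + 1 < n, j % 2 = 0 →
    c (m - 1, j + 1) = c (m - 1, j) + ((μ (.H (m - 1) j (by omega) hj) : ℤ) : ZMod 3)) ∧
  (∀ j : ℕ, ∀ hj : j + 1 < n, j % 2 = 1 →
    c (0, j + 1) = c (0, j) + ((μ (.H 0 j (by omega) hj) : ℤ) : ZMod 3))

/-- Applying the face flips of a list of faces in succession, starting from `μ`. -/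
def flipSeq {m n : ℕ} (μ : Crease m n → ℤ) (L : List (ℕ × ℕ)) : Crease m n → ℤ :=
  L.foldl (fun ν F => faceFlip ν F) μ

/-!
A Miura-locally-valid MV assignment is the discrete gradient of a height function on the faces
(neighbouring faces differ by one), the vertical creases of odd rows being read with the opposite
sign: the vertex conditions (a) and (b) say exactly that this gradient is curl-free. Lowering a
global maximum of the height by two is a single face flip between valid assignments. Heights can
be normalised to be congruent to the checkerboard `(i + j) % 2` modulo two; then repeatedly
lowering a global maximum strictly decreases `∑ (h - checkerboard)` until `h` is the checkerboard
up to a constant. So every valid assignment is connected to the checkerboard one, and face flips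
are involutions.
-/

open Function Relation

variable {m n : ℕ}

namespace Crease

lemma faceA_mem : ∀ e : Crease m n, faceA e ∈ Faces m n
  | .V _ _ hi hj | .H _ _ hi hj => by
    simp only [faceA, Faces, Finset.mem_product, Finset.mem_range]; omega

lemma faceB_mem : ∀ e : Crease m n, faceB e ∈ Faces m n
  | .V _ _ hi hj | .H _ _ hi hj => by
    simp only [faceB, Faces, Finset.mem_product, Finset.mem_range]; omega

lemma faceA_ne_faceB : ∀ e : Crease m n, faceA e ≠ faceB e
  | .V _ _ _ _ | .H _ _ _ _ => by simp [faceA, faceB]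

lemma borders_iff {F : ℕ × ℕ} : ∀ {e : Crease m n}, Borders F e ↔ F = faceA e ∨ F = faceB e
  | .V _ _ _ _ | .H _ _ _ _ => Iff.rfl

def sign : Crease m n → ℤ
  | .V _ j _ _ => if j % 2 = 0 then 1 else -1
  | .H _ _ _ _ => 1

lemma sign_eq_one_or_eq_neg_one : ∀ e : Crease m n, e.sign = 1 ∨ e.sign = -1
  | .V _ j _ _ => by by_cases j % 2 = 0 <;> simp [sign, *]
  | .H _ _ _ _ => .inl rfl

end Crease

open Crease

lemma faceFlip_faceFlip (μ : Crease m n → ℤ) (F : ℕ × ℕ) : faceFlip (faceFlip μ F) F = μ := by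
  funext e
  unfold faceFlip
  split_ifs <;> simp

def IsHeight (m n : ℕ) (h : ℕ × ℕ → ℤ) : Prop :=
  ∀ e : Crease m n, h (faceB e) - h (faceA e) = 1 ∨ h (faceB e) - h (faceA e) = -1

def mvOfHeight (h : ℕ × ℕ → ℤ) (e : Crease m n) : ℤ :=
  e.sign * (h (faceB e) - h (faceA e))

namespace IsHeight

variable {h : ℕ × ℕ → ℤ}

lemma isMV (hh : IsHeight m n h) : IsMV (mvOfHeight (m := m) (n := n) h) := by
  intro e
  rcases hh e with he | he <;> rcases sign_eq_one_or_eq_neg_one e with hs | hs <;>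
    simp [mvOfHeight, he, hs]

lemma miuraLocallyValid (hh : IsHeight m n h) :
    MiuraLocallyValid (mvOfHeight (m := m) (n := n) h) := by
  intro a b ha hb
  have h₁ := hh (.V a b ha (by omega))
  have h₂ := hh (.V a (b + 1) ha hb)
  have h₃ := hh (.H a b (by omega) hb)
  have h₄ := hh (.H (a + 1) b ha hb)
  simp only [faceA, faceB] at h₁ h₂ h₃ h₄
  rcases Nat.mod_two_eq_zero_or_one b with hb2 | hb2
  · have : (b + 1) % 2 = 1 := by omega
    simp only [mvOfHeight, sign, faceA, faceB, hb2, this]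
    norm_num
    omega
  · have : (b + 1) % 2 = 0 := by omega
    simp only [mvOfHeight, sign, faceA, faceB, hb2, this]
    norm_num
    omega

lemma two_dvd_sub (hh : IsHeight m n h) :
    ∀ F ∈ Faces m n, 2 ∣ h F - h (0, 0) - F.1 - F.2 := by
  rintro ⟨i, j⟩ hF
  simp only [Faces, Finset.mem_product, Finset.mem_range] at hF
  obtain ⟨hi, hj⟩ := hF
  induction i with
  | zero =>
    induction j with
    | zero => simp
    | succ j ih =>
      have := hh (.H 0 j hi hj)
      simp only [faceA, faceB] at this
      have := ih (by omega)
      push_cast at *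
      omega
  | succ i ih =>
    have := hh (.V i j hi hj)
    simp only [faceA, faceB] at this
    have := ih (by omega)
    push_cast at *
    omega

end IsHeight

lemma mvOfHeight_congr {h g : ℕ × ℕ → ℤ} {k : ℤ} (hk : ∀ F ∈ Faces m n, h F = g F + k) :
    mvOfHeight (m := m) (n := n) h = mvOfHeight g := by
  funext e
  simp only [mvOfHeight, hk _ (faceA_mem e), hk _ (faceB_mem e), add_sub_add_right_eq_sub]

def vertVal (μ : Crease m n → ℤ) (i j : ℕ) : ℤ :=
  if h : i + 1 < m ∧ j < n then μ (.V i j h.1 h.2) else 0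

def horizVal (μ : Crease m n → ℤ) (i j : ℕ) : ℤ :=
  if h : i < m ∧ j + 1 < n then μ (.H i j h.1 h.2) else 0

/-- Integrate `μ` along row `0` and then up column `F.1`; the Miura vertex condition makes the
result consistent with every vertical crease as well. -/
def heightOf (μ : Crease m n → ℤ) (F : ℕ × ℕ) : ℤ :=
  ∑ k ∈ Finset.range F.1, vertVal μ k 0 + ∑ l ∈ Finset.range F.2, horizVal μ F.1 l

lemma heightOf_succ_snd_sub (μ : Crease m n → ℤ) {i j : ℕ} (hi : i < m) (hj : j + 1 < n) :
    heightOf μ (i, j + 1) - heightOf μ (i, j) = μ (.H i j hi hj) := by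
  simp [heightOf, Finset.sum_range_succ, horizVal, hi, hj]

lemma heightOf_succ_fst_sub {μ : Crease m n → ℤ} (hmv : IsMV μ) (hval : MiuraLocallyValid μ)
    {i j : ℕ} (hi : i + 1 < m) (hj : j < n) :
    heightOf μ (i + 1, j) - heightOf μ (i, j) = (Crease.V i j hi hj).sign * μ (.V i j hi hj) := by
  induction j with
  | zero => simp [heightOf, Finset.sum_range_succ, vertVal, hi, hj, sign]
  | succ j ih =>
    have hj' : j < n := by omega
    have := ih hj'
    have := heightOf_succ_snd_sub μ (i := i) (by omega) hj
    have := heightOf_succ_snd_sub μ (i := i + 1) hi hj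
    have := hmv (.V i j hi hj')
    have := hmv (.V i (j + 1) hi hj)
    have := hmv (.H i j (by omega) hj)
    have := hmv (.H (i + 1) j hi hj)
    have hvertex := hval i j hi hj
    rcases Nat.mod_two_eq_zero_or_one j with hj2 | hj2
    · have : (j + 1) % 2 = 1 := by omega
      simp only [sign, hj2, this, ↓reduceIte, one_ne_zero, one_mul, neg_one_mul] at *
      omega
    · have : (j + 1) % 2 = 0 := by omega
      simp only [sign, hj2, this, ↓reduceIte, one_ne_zero, one_mul, neg_one_mul] at *
      omega

lemma heightOf_faceB_sub_faceA {μ : Crease m n → ℤ} (hmv : IsMV μ) (hval : MiuraLocallyValid μ) :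
    ∀ e : Crease m n, heightOf μ (faceB e) - heightOf μ (faceA e) = e.sign * μ e
  | .V _ _ hi hj => heightOf_succ_fst_sub hmv hval hi hj
  | .H _ _ hi hj => by rw [sign, one_mul]; exact heightOf_succ_snd_sub μ hi hj

lemma isHeight_heightOf {μ : Crease m n → ℤ} (hmv : IsMV μ) (hval : MiuraLocallyValid μ) :
    IsHeight m n (heightOf μ) := by
  intro e
  rw [heightOf_faceB_sub_faceA hmv hval]
  rcases hmv e with h | h <;> rcases sign_eq_one_or_eq_neg_one e with hs | hs <;> simp [h, hs]

lemma mvOfHeight_heightOf {μ : Crease m n → ℤ} (hmv : IsMV μ) (hval : MiuraLocallyValid μ) :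
    mvOfHeight (heightOf μ) = μ := by
  funext e
  rw [mvOfHeight, heightOf_faceB_sub_faceA hmv hval, ← mul_assoc]
  rcases sign_eq_one_or_eq_neg_one e with hs | hs <;> simp [hs]

/-- `F` is a strict local maximum of `h`: across every crease bordering `F` the height drops
by one. -/
def IsPeak (m n : ℕ) (h : ℕ × ℕ → ℤ) (F : ℕ × ℕ) : Prop :=
  ∀ e : Crease m n, Borders F e → h (faceA e) + h (faceB e) = 2 * h F - 1

lemma IsHeight.isPeak_of_forall_le {h : ℕ × ℕ → ℤ} {F : ℕ × ℕ} (hh : IsHeight m n h)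
    (hmax : ∀ G ∈ Faces m n, h G ≤ h F) : IsPeak m n h F := by
  intro e he
  have := hh e
  have := hmax _ (faceA_mem e)
  have := hmax _ (faceB_mem e)
  rcases borders_iff.mp he with rfl | rfl <;> omega

lemma sub_update_of_isPeak {h : ℕ × ℕ → ℤ} {F : ℕ × ℕ} (hF : IsPeak m n h F) (e : Crease m n) :
    update h F (h F - 2) (faceB e) - update h F (h F - 2) (faceA e) =
      if Borders F e then -(h (faceB e) - h (faceA e)) else h (faceB e) - h (faceA e) := by
  have hne := faceA_ne_faceB e
  split_ifs with he
  · have := hF e he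
    rcases borders_iff.mp he with rfl | rfl
    · simp [hne.symm]; omega
    · simp [hne]; omega
  · obtain ⟨hA, hB⟩ := not_or.mp (borders_iff.not.mp he)
    simp [Ne.symm hA, Ne.symm hB]

lemma IsHeight.update_of_isPeak {h : ℕ × ℕ → ℤ} {F : ℕ × ℕ} (hh : IsHeight m n h)
    (hF : IsPeak m n h F) : IsHeight m n (update h F (h F - 2)) := by
  intro e
  rw [sub_update_of_isPeak hF]
  have := hh e
  split_ifs <;> omega

lemma mvOfHeight_update_of_isPeak {h : ℕ × ℕ → ℤ} {F : ℕ × ℕ} (hF : IsPeak m n h F) :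
    mvOfHeight (m := m) (n := n) (update h F (h F - 2)) = faceFlip (mvOfHeight h) F := by
  funext e
  rw [mvOfHeight, sub_update_of_isPeak hF, faceFlip, mvOfHeight]
  split_ifs <;> ring

def FlipAdj (m n : ℕ) (μ ν : Crease m n → ℤ) : Prop :=
  (IsMV μ ∧ MiuraLocallyValid μ) ∧ (IsMV ν ∧ MiuraLocallyValid ν) ∧
    ∃ F ∈ Faces m n, ν = faceFlip μ F

instance : Std.Symm (FlipAdj m n) where
  symm _ _ := fun ⟨hμ, hν, F, hF, hflip⟩ => ⟨hν, hμ, F, hF, by rw [hflip, faceFlip_faceFlip]⟩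

lemma exists_flipSeq_of_reflTransGen {μ ν : Crease m n → ℤ}
    (hμν : ReflTransGen (FlipAdj m n) μ ν) (hmv : IsMV μ) (hval : MiuraLocallyValid μ) :
    ∃ L : List (ℕ × ℕ), (∀ F ∈ L, F ∈ Faces m n) ∧ flipSeq μ L = ν ∧
      ∀ k ≤ L.length, IsMV (flipSeq μ (L.take k)) ∧ MiuraLocallyValid (flipSeq μ (L.take k)) := by
  induction hμν using ReflTransGen.head_induction_on with
  | refl => exact ⟨[], by simp, rfl, fun k _ => by simpa using ⟨hmv, hval⟩⟩
  | head hstep _ ih =>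
    obtain ⟨-, ⟨hmv', hval'⟩, F, hF, rfl⟩ := hstep
    obtain ⟨L, hL, hLν, hLvalid⟩ := ih hmv' hval'
    refine ⟨F :: L, ?_, hLν, ?_⟩
    · simpa [hF] using hL
    · rintro (_ | k) hk
      · exact ⟨hmv, hval⟩
      · exact hLvalid k (by simpa using hk)

def checkerboard (F : ℕ × ℕ) : ℤ := (F.1 + F.2 : ℤ) % 2

def AboveCheckerboard (m n : ℕ) (b : ℤ) (h : ℕ × ℕ → ℤ) : Prop :=
  ∀ F ∈ Faces m n, 2 ∣ h F - checkerboard F ∧ checkerboard F + 2 * b ≤ h F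

lemma sum_update_sub_of_mem {ι G : Type*} [DecidableEq ι] [AddCommGroup G] {s : Finset ι} {i : ι}
    (hi : i ∈ s) (f g : ι → G) (b : G) :
    ∑ x ∈ s, (update f i b x - g x) = ∑ x ∈ s, (f x - g x) + (b - f i) := by
  rw [Finset.sum_sub_distrib, Finset.sum_sub_distrib, Finset.sum_update_of_mem hi,
    Finset.sum_eq_add_sum_sdiff_singleton_of_mem hi f]
  abel

lemma AboveCheckerboard.update {h : ℕ × ℕ → ℤ} {b : ℤ} {F : ℕ × ℕ}
    (hbound : AboveCheckerboard m n b h) (hF : F ∈ Faces m n)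
    (hFb : checkerboard F + 2 * b + 2 ≤ h F) :
    AboveCheckerboard m n b (update h F (h F - 2)) := by
  intro F' hF'
  by_cases hFF' : F' = F
  · subst hFF'
    have := (hbound F' hF).1
    simp only [update_self]
    omega
  · simpa [hFF'] using hbound F' hF'

lemma IsHeight.exists_isPeak_of_exists_ne {h : ℕ × ℕ → ℤ} {b : ℤ} (hh : IsHeight m n h)
    (hbound : AboveCheckerboard m n b h)
    (hflat : ∃ G ∈ Faces m n, h G ≠ checkerboard G + 2 * b) :
    ∃ F ∈ Faces m n, IsPeak m n h F ∧ checkerboard F + 2 * b + 2 ≤ h F := by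
  obtain ⟨G, hG, hGb⟩ := hflat
  obtain ⟨F, hF, hmax⟩ := Finset.exists_max_image (Faces m n) h ⟨G, hG⟩
  refine ⟨F, hF, hh.isPeak_of_forall_le hmax, ?_⟩
  -- `h G` is off its floor, so by parity at least two above it; the maximum `h F` is as well.
  have := hbound G hG
  have := hbound F hF
  have := hmax G hG
  simp only [checkerboard] at *
  omega

lemma IsHeight.reflTransGen_checkerboard_of_sum_le {h : ℕ × ℕ → ℤ} {b : ℤ} {N : ℕ}
    (hh : IsHeight m n h) (hbound : AboveCheckerboard m n b h)
    (hN : ∑ F ∈ Faces m n, (h F - (checkerboard F + 2 * b)) ≤ N) :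
    ReflTransGen (FlipAdj m n) (mvOfHeight h) (mvOfHeight checkerboard) := by
  induction N using Nat.strong_induction_on generalizing h with
  | _ N ih =>
    by_cases hflat : ∀ F ∈ Faces m n, h F = checkerboard F + 2 * b
    · rw [mvOfHeight_congr hflat]
    obtain ⟨F, hF, hpeak, hFb⟩ := hh.exists_isPeak_of_exists_ne hbound (by simpa using hflat)
    have hsum := sum_update_sub_of_mem hF h (fun F => checkerboard F + 2 * b) (h F - 2)
    have hnonneg : ∀ F ∈ Faces m n, 0 ≤ h F - (checkerboard F + 2 * b) :=
      fun F hF => sub_nonneg.mpr (hbound F hF).2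
    have hN2 : 2 ≤ N := by linarith [Finset.single_le_sum hnonneg hF]
    have hh' := hh.update_of_isPeak hpeak
    refine .head ⟨⟨hh.isMV, hh.miuraLocallyValid⟩, ⟨hh'.isMV, hh'.miuraLocallyValid⟩, F, hF,
      mvOfHeight_update_of_isPeak hpeak⟩ (ih (N - 2) (by omega) hh' (hbound.update hF hFb) ?_)
    push_cast [hN2]
    linarith

lemma IsHeight.reflTransGen_checkerboard {h : ℕ × ℕ → ℤ} (hh : IsHeight m n h) :
    ReflTransGen (FlipAdj m n) (mvOfHeight h) (mvOfHeight checkerboard) := by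
  set h₀ : ℕ × ℕ → ℤ := fun F => h F - h (0, 0)
  have hh₀ : IsHeight m n h₀ := fun e => by simpa [h₀] using hh e
  obtain ⟨b, hb⟩ := (Finset.image (fun F => h₀ F - checkerboard F) (Faces m n)).bddBelow
  have hbound : AboveCheckerboard m n (b / 2) h₀ := fun F hF => by
    have := hh.two_dvd_sub F hF
    have := hb (Finset.mem_coe.mpr (Finset.mem_image_of_mem _ hF))
    simp only [h₀, checkerboard] at *
    omega
  rw [mvOfHeight_congr (g := h₀) (k := h (0, 0)) (by simp [h₀])]
  exact hh₀.reflTransGen_checkerboard_of_sum_le hbound (Int.self_le_toNat _)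

lemma reflTransGen_mvOfHeight_checkerboard {μ : Crease m n → ℤ} (hmv : IsMV μ)
    (hval : MiuraLocallyValid μ) :
    ReflTransGen (FlipAdj m n) μ (mvOfHeight checkerboard) := by
  simpa [mvOfHeight_heightOf hmv hval] using (isHeight_heightOf hmv hval).reflTransGen_checkerboard

theorem miura_flip_graph_connected_general (m n : ℕ)
    (μ₁ μ₂ : Crease m n → ℤ) (hmv₁ : IsMV μ₁) (hmv₂ : IsMV μ₂)
    (hval₁ : MiuraLocallyValid μ₁) (hval₂ : MiuraLocallyValid μ₂) :
    ∃ L : List (ℕ × ℕ), (∀ F ∈ L, F ∈ Faces m n) ∧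
      flipSeq μ₁ L = μ₂ ∧
      ∀ k ≤ L.length,
        IsMV (flipSeq μ₁ (L.take k)) ∧ MiuraLocallyValid (flipSeq μ₁ (L.take k)) :=
  exists_flipSeq_of_reflTransGen
    ((reflTransGen_mvOfHeight_checkerboard hmv₁ hval₁).trans
      (symm (reflTransGen_mvOfHeight_checkerboard hmv₂ hval₂)))
    hmv₁ hval₁

/-- Any two Miura-locally-valid MV assignments of the Miura-ori are connected by a
finite sequence of single face flips all of whose intermediate MV assignments are
Miura-locally-valid: the origami flip graph of the Miura-ori is connected. -/
theorem miura_flip_graph_connected (m n : ℕ) (hm : 1 ≤ m) (hn : 1 ≤ n)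
    (μ₁ μ₂ : Crease m n → ℤ) (hmv₁ : IsMV μ₁) (hmv₂ : IsMV μ₂)
    (hval₁ : MiuraLocallyValid μ₁) (hval₂ : MiuraLocallyValid μ₂) :
    ∃ L : List (ℕ × ℕ), (∀ F ∈ L, F ∈ Faces m n) ∧
      flipSeq μ₁ L = μ₂ ∧
      ∀ k ≤ L.length,
        IsMV (flipSeq μ₁ (L.take k)) ∧ MiuraLocallyValid (flipSeq μ₁ (L.take k)) :=
  miura_flip_graph_connected_general m n μ₁ μ₂ hmv₁ hmv₂ hval₁ hval₂
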